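/- For every α ∈ Φ_K⁺ and every subset Υ ⊆ Φ_G⁺ \ Φ_K⁺ one has α ≠ Σ_{θ∈Λ} θ − Σ_{θ∈Υ} θ; that is, setting δ_n = half the sum of the elements of Φ_G⁺ \ Φ_K⁺, the vector (δ_n − Σ_{θ∈Λ} θ) + α is never of the form δ_n − Σ_{θ∈Υ} θ with Υ ⊆ Φ_G⁺ \ Φ_K⁺. -/

import Mathlib

/-!
Pair both sides with `δ_K`. On the left, `⟪α, δ_K⟫ > 0`: the reflection `s_α` permutes the roots
of `Φ_K⁺` it keeps in `Φ_K⁺` while negating their pairings with `α`, so these pairings sum to zero,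
and every root of `Φ_K⁺` that `s_α` makes negative (`α` among them) pairs positively with `α`.
On the right, `Λ` collects exactly the positive roots pairing negatively with `δ_K`, so
`⟪∑_Λ θ, δ_K⟫` is the minimum of `⟪∑_Υ θ, δ_K⟫` over all `Υ ⊆ Φ_G⁺`, and the pairing is `≤ 0`.
-/

open scoped RealInnerProductSpace

/-- The reflection in the hyperplane orthogonal to `α`. -/
noncomputable def rootReflection {V : Type*} [NormedAddCommGroup V] [InnerProductSpace ℝ V]
    [FiniteDimensional ℝ V] (α : V) : V ≃ₗᵢ[ℝ] V :=
  Submodule.reflection ((ℝ ∙ α)ᗮ)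

/-- The Weyl group: the group generated by the reflections in the roots. -/
noncomputable def weylGroup {V : Type*} [NormedAddCommGroup V] [InnerProductSpace ℝ V]
    [FiniteDimensional ℝ V] (Φ : Finset V) : Subgroup (V ≃ₗᵢ[ℝ] V) :=
  Subgroup.closure { w | ∃ α ∈ Φ, w = rootReflection α }

lemma Finset.sum_le_sum_of_subset_of_mem_iff_neg {ι : Type*} (g : ι → ℝ) {A Λ Υ : Finset ι}
    (hΛ : ∀ i, i ∈ Λ ↔ i ∈ A ∧ g i < 0) (hΥ : Υ ⊆ A) :
    ∑ i ∈ Λ, g i ≤ ∑ i ∈ Υ, g i := by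
  classical
  have hsplit := Finset.sum_sdiff (f := g) (Finset.inter_subset_left : Λ ∩ Υ ⊆ Λ)
  have hdropped : ∑ i ∈ Λ \ (Λ ∩ Υ), g i ≤ 0 :=
    Finset.sum_nonpos fun i hi => ((hΛ i).1 (Finset.mem_sdiff.1 hi).1).2.le
  have hadded : ∑ i ∈ Λ ∩ Υ, g i ≤ ∑ i ∈ Υ, g i :=
    Finset.sum_le_sum_of_subset_of_nonneg Finset.inter_subset_right
      fun i hi hiΛ => not_lt.1 fun hneg => hiΛ (Finset.mem_inter.2 ⟨(hΛ i).2 ⟨hΥ hi, hneg⟩, hi⟩)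
  linarith

section rootReflection

variable {V : Type*} [NormedAddCommGroup V] [InnerProductSpace ℝ V] [FiniteDimensional ℝ V]

lemma rootReflection_apply (α β : V) :
    rootReflection α β = β - (2 * (⟪α, β⟫ / ‖α‖ ^ 2)) • α := by
  rw [rootReflection, Submodule.reflection_apply, Submodule.starProjection_orthogonal_val,
    Submodule.starProjection_singleton, two_mul, add_smul]
  abel

lemma rootReflection_self (α : V) : rootReflection α α = -α :=
  Submodule.reflection_orthogonalComplement_singleton_eq_neg α

lemma rootReflection_rootReflection (α β : V) : rootReflection α (rootReflection α β) = β :=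
  Submodule.reflection_reflection _ _

lemma inner_rootReflection_right (α β : V) : ⟪α, rootReflection α β⟫ = -⟪α, β⟫ := by
  rw [← (rootReflection α).inner_map_map, rootReflection_self, rootReflection_rootReflection,
    inner_neg_left]

lemma sum_inner_eq_zero_of_rootReflection_mem {S : Finset V} (α : V)
    (hS : ∀ θ ∈ S, rootReflection α θ ∈ S) : ∑ θ ∈ S, ⟪α, θ⟫ = 0 := by
  have hperm : ∑ θ ∈ S, ⟪α, θ⟫ = ∑ θ ∈ S, ⟪α, rootReflection α θ⟫ :=
    Finset.sum_nbij' (rootReflection α) (rootReflection α) hS hS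
      (fun θ _ => rootReflection_rootReflection α θ)
      (fun θ _ => rootReflection_rootReflection α θ)
      (fun θ _ => by rw [rootReflection_rootReflection])
  simp only [inner_rootReflection_right, Finset.sum_neg_distrib] at hperm
  linarith

lemma inner_pos_of_map_rootReflection_nonpos (f : V →ₗ[ℝ] ℝ) {α θ : V} (hα : 0 < f α)
    (hθ : 0 < f θ) (hsθ : f (rootReflection α θ) ≤ 0) : 0 < ⟪α, θ⟫ := by
  have hα0 : α ≠ 0 := by rintro rfl; simp at hα
  rw [rootReflection_apply, map_sub, map_smul, smul_eq_mul] at hsθ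
  have hcoeff : 0 < ⟪α, θ⟫ / ‖α‖ ^ 2 := by nlinarith
  exact (div_pos_iff_of_pos_right (by positivity)).1 hcoeff

theorem inner_sum_pos_of_rootReflection (f : V →ₗ[ℝ] ℝ) {P : Finset V} (hP : ∀ θ ∈ P, 0 < f θ)
    {α : V} (hα : α ∈ P) (hout : ∀ θ ∈ P, rootReflection α θ ∉ P → f (rootReflection α θ) ≤ 0) :
    0 < ⟪α, ∑ θ ∈ P, θ⟫ := by
  classical
  have hfα := hP α hα
  have hα0 : α ≠ 0 := by rintro rfl; simp at hfα
  have hsα : rootReflection α α ∉ P := fun h => by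
    have := hP _ h
    rw [rootReflection_self, map_neg] at this
    linarith
  have hS : ∑ θ ∈ P with rootReflection α θ ∈ P, ⟪α, θ⟫ = 0 :=
    sum_inner_eq_zero_of_rootReflection_mem α fun θ hθ => by
      rw [Finset.mem_filter] at hθ ⊢
      exact ⟨hθ.2, by rw [rootReflection_rootReflection]; exact hθ.1⟩
  have hT : ⟪α, α⟫ ≤ ∑ θ ∈ P with rootReflection α θ ∉ P, ⟪α, θ⟫ :=
    Finset.single_le_sum (fun θ hθ => by
        rw [Finset.mem_filter] at hθ
        exact (inner_pos_of_map_rootReflection_nonpos f hfα (hP θ hθ.1) (hout θ hθ.1 hθ.2)).le)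
      (Finset.mem_filter.2 ⟨hα, hsα⟩)
  rw [inner_sum, ← Finset.sum_filter_add_sum_filter_not P (fun θ => rootReflection α θ ∈ P), hS]
  linarith [real_inner_self_pos.2 hα0]

end rootReflection

theorem stmt5_general {V : Type*} [NormedAddCommGroup V] [InnerProductSpace ℝ V] [FiniteDimensional ℝ V]
    (Φ : Finset V)
    (ΦGp : Finset V)
    (hΦGp : ∃ f : V →ₗ[ℝ] ℝ, (∀ α ∈ Φ, f α ≠ 0) ∧ ∀ α, α ∈ ΦGp ↔ α ∈ Φ ∧ 0 < f α)
    (ΦK : Finset V) (hΦKsub : ΦK ⊆ Φ)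
    (hΦKrefl : ∀ α ∈ ΦK, ∀ β ∈ ΦK, rootReflection α β ∈ ΦK)
    (ΦKp : Finset V) (hΦKp : ∀ α, α ∈ ΦKp ↔ α ∈ ΦK ∧ α ∈ ΦGp)
    (δK : V) (hδK : δK = (2⁻¹ : ℝ) • ∑ α ∈ ΦKp, α)
    (Λ : Finset V) (hΛ : ∀ θ, θ ∈ Λ ↔ θ ∈ ΦGp ∧ ⟪θ, δK⟫ < 0) :
    ∀ α ∈ ΦKp, ∀ Υ : Finset V, (∀ θ ∈ Υ, θ ∈ ΦGp ∧ θ ∉ ΦKp) →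
      α ≠ ∑ θ ∈ Λ, θ - ∑ θ ∈ Υ, θ := by
  intro α hα Υ hΥ hEq
  obtain ⟨f, -, hfmem⟩ := hΦGp
  have hpos : ∀ θ ∈ ΦKp, 0 < f θ := fun θ hθ => ((hfmem θ).1 ((hΦKp θ).1 hθ).2).2
  have hout : ∀ θ ∈ ΦKp, rootReflection α θ ∉ ΦKp → f (rootReflection α θ) ≤ 0 := by
    intro θ hθ hsθ
    have hsθK := hΦKrefl α ((hΦKp α).1 hα).1 θ ((hΦKp θ).1 hθ).1
    exact not_lt.1 fun hfsθ => hsθ ((hΦKp _).2 ⟨hsθK, (hfmem _).2 ⟨hΦKsub hsθK, hfsθ⟩⟩)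
  have hαδK : 0 < ⟪α, δK⟫ := by
    rw [hδK, real_inner_smul_right]
    exact mul_pos (by norm_num) (inner_sum_pos_of_rootReflection f hpos hα hout)
  have hΛΥ : ∑ θ ∈ Λ, ⟪θ, δK⟫ ≤ ∑ θ ∈ Υ, ⟪θ, δK⟫ :=
    Finset.sum_le_sum_of_subset_of_mem_iff_neg (fun θ => ⟪θ, δK⟫) hΛ fun θ hθ => (hΥ θ hθ).1
  rw [hEq, inner_sub_left, sum_inner, sum_inner] at hαδK
  linarith

theorem stmt5 {V : Type*} [NormedAddCommGroup V] [InnerProductSpace ℝ V] [FiniteDimensional ℝ V]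
    (Φ : Finset V) (hΦ0 : (0 : V) ∉ Φ)
    (hspan : Submodule.span ℝ (Φ : Set V) = ⊤)
    (hred : ∀ α ∈ Φ, ∀ t : ℝ, t • α ∈ Φ → t = 1 ∨ t = -1)
    (hrefl : ∀ α ∈ Φ, ∀ β ∈ Φ, rootReflection α β ∈ Φ)
    (ΦGp : Finset V)
    (hΦGp : ∃ f : V →ₗ[ℝ] ℝ, (∀ α ∈ Φ, f α ≠ 0) ∧ ∀ α, α ∈ ΦGp ↔ α ∈ Φ ∧ 0 < f α)
    (δG : V) (hδG : δG = (2⁻¹ : ℝ) • ∑ α ∈ ΦGp, α)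
    (ΦK : Finset V) (hΦKsub : ΦK ⊆ Φ)
    (hΦKneg : ∀ α ∈ ΦK, -α ∈ ΦK)
    (hΦKrefl : ∀ α ∈ ΦK, ∀ β ∈ ΦK, rootReflection α β ∈ ΦK)
    (ΦKp : Finset V) (hΦKp : ∀ α, α ∈ ΦKp ↔ α ∈ ΦK ∧ α ∈ ΦGp)
    (δK : V) (hδK : δK = (2⁻¹ : ℝ) • ∑ α ∈ ΦKp, α)
    (Λ : Finset V) (hΛ : ∀ θ, θ ∈ Λ ↔ θ ∈ ΦGp ∧ ⟪θ, δK⟫ < 0) :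
    ∀ α ∈ ΦKp, ∀ Υ : Finset V, (∀ θ ∈ Υ, θ ∈ ΦGp ∧ θ ∉ ΦKp) →
      α ≠ ∑ θ ∈ Λ, θ - ∑ θ ∈ Υ, θ :=
  stmt5_general Φ ΦGp hΦGp ΦK hΦKsub hΦKrefl ΦKp hΦKp δK hδK Λ hΛ
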